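/- For every real number m ≥ 1 there exists a constant c₀ > 0 such that for all real numbers a, b: (|a|^{m-1}·a − |b|^{m-1}·b)·(a − b) ≥ c₀·|a − b|^{m+1}. -/
import Mathlib

private lemma aux_rpow_mul_self {x m : ℝ} (hx : 0 ≤ x) (hm : 0 < m) :
    x ^ (m - 1) * x = x ^ m := by
  rcases eq_or_lt_of_le hx with h | h
  · simp [← h, Real.zero_rpow (ne_of_gt hm)]
  · rw [← Real.rpow_add_one (ne_of_gt h)]; ring_nf

private lemma aux_superadd {x y p : ℝ} (hx : 0 ≤ x) (hy : 0 ≤ y) (hp : 1 ≤ p) :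
    x ^ p + y ^ p ≤ (x + y) ^ p := by
  have h := NNReal.coe_le_coe.2 (NNReal.add_rpow_le_rpow_add ⟨x, hx⟩ ⟨y, hy⟩ hp)
  push_cast [NNReal.coe_rpow] at h
  exact h

private lemma aux_key (m : ℝ) (hm : 1 ≤ m) (a b : ℝ) (hba : b ≤ a) (hab : 0 ≤ a + b) :
    (|a| ^ (m - 1) * a - |b| ^ (m - 1) * b) * (a - b) ≥ (2:ℝ) ^ (-m) * |a - b| ^ (m + 1) := by
  have hm0 : (0:ℝ) < m := by linarith
  have ha : 0 ≤ a := by linarith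
  have hd : 0 ≤ a - b := by linarith
  have h2m : (0:ℝ) < (2:ℝ) ^ (-m) := Real.rpow_pos_of_pos two_pos _
  have h2m1 : (2:ℝ) ^ (-m) ≤ 1 :=
    Real.rpow_le_one_of_one_le_of_nonpos one_le_two (by linarith)
  have hdm : (a - b) ^ (m + 1) = (a - b) ^ m * (a - b) := by
    rw [← aux_rpow_mul_self hd (by linarith : (0:ℝ) < m + 1)]; ring_nf
  have hdmpos : 0 ≤ (a - b) ^ m := Real.rpow_nonneg hd m
  rw [abs_of_nonneg ha, abs_of_nonneg hd, aux_rpow_mul_self ha hm0, hdm]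
  rcases le_or_gt 0 b with hb | hb
  · rw [abs_of_nonneg hb, aux_rpow_mul_self hb hm0]
    have h1 : (a - b) ^ m + b ^ m ≤ a ^ m := by
      have := aux_superadd hd hb hm
      rwa [sub_add_cancel] at this
    have hA : (2:ℝ) ^ (-m) * (a - b) ^ m ≤ a ^ m - b ^ m := by
      nlinarith [Real.rpow_nonneg hb m]
    calc (2:ℝ) ^ (-m) * ((a - b) ^ m * (a - b)) = ((2:ℝ) ^ (-m) * (a - b) ^ m) * (a - b) := by ring
      _ ≤ (a ^ m - b ^ m) * (a - b) := mul_le_mul_of_nonneg_right hA hd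
  · rw [abs_of_neg hb]
    have hy : 0 ≤ -b := by linarith
    have hfb : (-b) ^ (m - 1) * b = -((-b) ^ m) := by
      rw [← aux_rpow_mul_self hy hm0]; ring
    rw [hfb, sub_neg_eq_add]
    -- need (a^m + (-b)^m) * (a - b) ≥ 2^{-m} * ((a-b)^m * (a-b))
    have hsum : (2:ℝ) ^ (-m) * (a - b) ^ m ≤ a ^ m + (-b) ^ m := by
      have hmax : a - b ≤ 2 * max a (-b) := by
        rcases le_total a (-b) with h | h
        · have := le_max_right a (-b); linarith [max_eq_right h]
        · have := le_max_left a (-b); linarith [max_eq_left h]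
      have hmx : 0 ≤ max a (-b) := le_trans ha (le_max_left _ _)
      have h1 : (a - b) ^ m ≤ (2 * max a (-b)) ^ m :=
        Real.rpow_le_rpow hd hmax (le_of_lt hm0)
      have h2 : (2 * max a (-b)) ^ m = 2 ^ m * (max a (-b)) ^ m :=
        Real.mul_rpow (by norm_num) hmx
      have h3 : (max a (-b)) ^ m ≤ a ^ m + (-b) ^ m := by
        rcases max_cases a (-b) with ⟨he, _⟩ | ⟨he, _⟩ <;> rw [he]
        · nlinarith [Real.rpow_nonneg hy m]
        · nlinarith [Real.rpow_nonneg ha m]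
      have h4 : (2:ℝ) ^ (-m) * (a - b) ^ m ≤ (2:ℝ) ^ (-m) * (2 ^ m * (max a (-b)) ^ m) := by
        rw [← h2]; exact mul_le_mul_of_nonneg_left h1 (le_of_lt h2m)
      have h5 : (2:ℝ) ^ (-m) * (2:ℝ) ^ m = 1 := by
        rw [← Real.rpow_add two_pos]; simp
      calc (2:ℝ) ^ (-m) * (a - b) ^ m ≤ (2:ℝ) ^ (-m) * 2 ^ m * (max a (-b)) ^ m := by
              linarith [h4]
        _ = (max a (-b)) ^ m := by rw [h5, one_mul]
        _ ≤ a ^ m + (-b) ^ m := h3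
    calc (2:ℝ) ^ (-m) * ((a - b) ^ m * (a - b)) = ((2:ℝ) ^ (-m) * (a - b) ^ m) * (a - b) := by ring
      _ ≤ (a ^ m + (-b) ^ m) * (a - b) := mul_le_mul_of_nonneg_right hsum hd
      _ ≤ (a ^ m + (-b) ^ m) * (a - b) := le_refl _

theorem stmt_0 (m : ℝ) (hm : 1 ≤ m) :
    ∃ c₀ > (0:ℝ), ∀ a b : ℝ,
      (|a| ^ (m - 1) * a - |b| ^ (m - 1) * b) * (a - b) ≥ c₀ * |a - b| ^ (m + 1) := by
  refine ⟨(2:ℝ) ^ (-m), Real.rpow_pos_of_pos two_pos _, fun a b => ?_⟩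
  rcases le_total b a with h1 | h1 <;> rcases le_total 0 (a + b) with h2 | h2
  · exact aux_key m hm a b h1 h2
  · have := aux_key m hm (-b) (-a) (by linarith) (by linarith)
    simp only [abs_neg] at this
    have heq : |(-b) - (-a)| = |a - b| := by rw [show (-b) - (-a) = a - b by ring]
    rw [heq] at this
    nlinarith [this]
  · have := aux_key m hm b a h1 (by linarith)
    have heq : |b - a| = |a - b| := abs_sub_comm b a
    rw [heq] at this
    nlinarith [this]
  · have := aux_key m hm (-a) (-b) (by linarith) (by linarith)
    simp only [abs_neg] at this
    have heq : |(-a) - (-b)| = |b - a| := by rw [show (-a) - (-b) = b - a by ring]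
    rw [heq, abs_sub_comm b a] at this
    nlinarith [this]
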